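/- Let L ⊆ Σ^ω be recognised by a nice history-deterministic coBüchi automaton A. Let R₁,…,R_m be the distinct residuals of L, with R₁ the residual recognised by the initial state; for each j let Q^{R_j} be the set of states of A recognising R_j. Let (S₁,Δ₁),…,(S_k,Δ_k) be the safe components of A and set n_j = max_{1≤i≤k} |S_i ∩ Q^{R_j}|. Let B be the generalised coBüchi automaton with state set Q = P₁ ⊎ … ⊎ P_m where P_j = {p_j^1,…,p_j^{n_j}}, initial state p_1^1, transition set Δ containing (p,a,p') for all p ∈ P_j and p' ∈ P_{j'} whenever A has a transition (q,a,q') with q ∈ Q^{R_j} and q' ∈ Q^{R_{j'}}, colour set {1,…,k} and acceptance genCoBuchi({1,…,k}), whose colouring is defined as follows: for each i ∈ {1,…,k} fix an injective morphism of automaton structures φ_i : (S_i,Δ_i) → (Q,Δ) with φ_i(q) ∈ P_j whenever q ∈ Q^{R_j} (one exists), and set col(e) = {i : e is not the image under φ_i of any transition of Δ_i}. Then B is history-deterministic and L(B) = L. -/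

import Mathlib

/-- A transition of an automaton: source state, input letter, output colour,
destination state.  (Acceptance is transition-based.) -/
structure AutTrans (Q A Γ : Type) where
  src : Q
  lab : A
  out : Γ
  dst : Q

/-- An (ω-)automaton with finite state set `Q`, input alphabet `A`,
output alphabet `Γ`, initial state `init`, transition set `delta` and
acceptance condition `acc ⊆ Γ^ω`. -/
structure Automaton (A Γ : Type) where
  Q : Type
  fin : Fintype Q
  init : Q
  delta : Set (AutTrans Q A Γ)
  acc : Set (ℕ → Γ)

/-- The generalised Büchi condition over the colour set `C`
(output alphabet `𝒫(C)`): every colour appears infinitely often. -/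
def genBuchi (C : Type) : Set (ℕ → Set C) :=
  {f | ∀ c : C, ∀ n : ℕ, ∃ m : ℕ, n ≤ m ∧ c ∈ f m}

/-- The generalised coBüchi condition over the colour set `C`:
some colour appears only finitely often. -/
def genCoBuchi (C : Type) : Set (ℕ → Set C) :=
  {f | ∃ c : C, ∃ n : ℕ, ∀ m : ℕ, n ≤ m → c ∉ f m}

namespace Automaton

variable {A Γ : Type}

/-- Number of states. -/
def size (M : Automaton A Γ) : ℕ := @Fintype.card M.Q M.fin

/-- `ρ` is a run of `M` on the word `w`, starting in the state `q`. -/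
def IsRunFrom (M : Automaton A Γ) (q : M.Q) (w : ℕ → A)
    (ρ : ℕ → AutTrans M.Q A Γ) : Prop :=
  (ρ 0).src = q ∧ ∀ n : ℕ, ρ n ∈ M.delta ∧ (ρ n).lab = w n ∧ (ρ n).dst = (ρ (n + 1)).src

/-- The language of `M` with initial state `q`. -/
def LangFrom (M : Automaton A Γ) (q : M.Q) : Set (ℕ → A) :=
  {w | ∃ ρ : ℕ → AutTrans M.Q A Γ, M.IsRunFrom q w ρ ∧ (fun n => (ρ n).out) ∈ M.acc}

/-- The language of `M`. -/
def Lang (M : Automaton A Γ) : Set (ℕ → A) := M.LangFrom M.init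

/-- For every state and letter there is at most one outgoing transition. -/
def Deterministic (M : Automaton A Γ) : Prop :=
  ∀ t ∈ M.delta, ∀ t' ∈ M.delta, t.src = t'.src → t.lab = t'.lab → t = t'

/-- For every state and letter there is at least one outgoing transition. -/
def Complete (M : Automaton A Γ) : Prop :=
  ∀ (p : M.Q) (a : A), ∃ t ∈ M.delta, t.src = p ∧ t.lab = a

/-- The infinite sequence of transitions chosen by a resolver `r` on the word `w`
(`r` is applied to all nonempty finite prefixes of `w`). -/
def resRun (M : Automaton A Γ) (r : List A → AutTrans M.Q A Γ) (w : ℕ → A) :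
    ℕ → AutTrans M.Q A Γ :=
  fun n => r (List.ofFn fun i : Fin (n + 1) => w i)

/-- `r` is a resolver for `M`: on every word it induces a run,
which is accepting whenever the word is in the language of `M`. -/
def IsResolver (M : Automaton A Γ) (r : List A → AutTrans M.Q A Γ) : Prop :=
  ∀ w : ℕ → A, M.IsRunFrom M.init w (M.resRun r w) ∧
    (w ∈ M.Lang → (fun n => (M.resRun r w n).out) ∈ M.acc)

/-- History-determinism: existence of a resolver. -/
def HistoryDeterministic (M : Automaton A Γ) : Prop := ∃ r, M.IsResolver r

/-- `M` admits a resolver such that every state occurs on some accepting run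
induced by the resolver. -/
def ResolverTrim (M : Automaton A Γ) : Prop :=
  ∃ r, M.IsResolver r ∧ ∀ q : M.Q, ∃ w ∈ M.Lang, ∃ n : ℕ, (M.resRun r w n).src = q

/-- Reachability along transitions of `M`. -/
def Reach (M : Automaton A Γ) (p q : M.Q) : Prop :=
  Relation.ReflTransGen (fun x y => ∃ t ∈ M.delta, t.src = x ∧ t.dst = y) p q

/-- Nondeterministic choices lead to language-equivalent states. -/
def SemanticallyDeterministic (M : Automaton A Γ) : Prop :=
  ∀ t ∈ M.delta, ∀ t' ∈ M.delta, t.src = t'.src → t.lab = t'.lab →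
    M.LangFrom t.dst = M.LangFrom t'.dst

/- CoBüchi notions: a coBüchi automaton has output alphabet `Set Unit`
(`𝒫(C)` with `|C| = 1`); a transition is a coBüchi transition iff its output
is `{()}` (i.e. `() ∈ out`), and safe iff its output is `∅`. -/

/-- A safe (non-coBüchi) transition from `p` to `q`. -/
def SafeStep (M : Automaton A (Set Unit)) (p q : M.Q) : Prop :=
  ∃ t ∈ M.delta, t.src = p ∧ t.dst = q ∧ () ∉ t.out

/-- `p` and `q` lie in the same safe component (same SCC of the safe graph). -/
def SafeConn (M : Automaton A (Set Unit)) (p q : M.Q) : Prop :=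
  Relation.ReflTransGen M.SafeStep p q ∧ Relation.ReflTransGen M.SafeStep q p

/-- The safe component (as a set of states) of `q`. -/
def safeComponentOf (M : Automaton A (Set Unit)) (q : M.Q) : Set M.Q :=
  {p | M.SafeConn p q}

/-- `(S, D)` is a safe component of `M`, given with its set of safe transitions. -/
def IsSafeComponent (M : Automaton A (Set Unit)) (S : Set M.Q)
    (D : Set (AutTrans M.Q A (Set Unit))) : Prop :=
  (∃ q : M.Q, S = M.safeComponentOf q) ∧
    D = {t | t ∈ M.delta ∧ t.src ∈ S ∧ t.dst ∈ S ∧ () ∉ t.out}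

/-- The safe language of the state `q`: words labelling an infinite safe path from `q`. -/
def SafeLang (M : Automaton A (Set Unit)) (q : M.Q) : Set (ℕ → A) :=
  {w | ∃ ρ : ℕ → AutTrans M.Q A (Set Unit),
    M.IsRunFrom q w ρ ∧ ∀ n : ℕ, () ∉ (ρ n).out}

/-- The automaton restricted to safe transitions is deterministic. -/
def SafeDeterministic (M : Automaton A (Set Unit)) : Prop :=
  ∀ t ∈ M.delta, ∀ t' ∈ M.delta, () ∉ t.out → () ∉ t'.out →
    t.src = t'.src → t.lab = t'.lab → t = t'

/-- Every transition joining two distinct safe components is a coBüchi transition. -/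
def NormalForm (M : Automaton A (Set Unit)) : Prop :=
  ∀ t ∈ M.delta, () ∉ t.out → M.SafeConn t.src t.dst

/-- A coBüchi automaton is nice if all states are reachable and it is
semantically deterministic, in normal form, and safe deterministic. -/
def Nice (M : Automaton A (Set Unit)) : Prop :=
  (∀ q : M.Q, M.Reach M.init q) ∧ M.SemanticallyDeterministic ∧
    M.NormalForm ∧ M.SafeDeterministic

/-- Equivalent states with equal safe languages are equal. -/
def SafeMinimal (M : Automaton A (Set Unit)) : Prop :=
  ∀ p q : M.Q, M.LangFrom p = M.LangFrom q → M.SafeLang p = M.SafeLang q → p = q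

/-- Equivalent states with safe languages comparable for inclusion lie in the
same safe component. -/
def SafeCentralised (M : Automaton A (Set Unit)) : Prop :=
  ∀ p q : M.Q, M.LangFrom p = M.LangFrom q →
    (M.SafeLang p ⊆ M.SafeLang q ∨ M.SafeLang q ⊆ M.SafeLang p) → M.SafeConn p q

end Automaton

/-- The word `u · w`. -/
def wordAppend {A : Type} (u : List A) (w : ℕ → A) : ℕ → A :=
  fun n => if h : n < u.length then u.get ⟨n, h⟩ else w (n - u.length)

/-- The residual `u⁻¹L`. -/
def residualLang {A : Type} (u : List A) (L : Set (ℕ → A)) : Set (ℕ → A) :=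
  {w | wordAppend u w ∈ L}

/-- `L` is prefix-independent: `u⁻¹L = L` for every finite word `u`. -/
def PrefixIndependent {A : Type} (L : Set (ℕ → A)) : Prop :=
  ∀ u : List A, residualLang u L = L

/-- The local alphabet `Σ_R` at the residual `R`: nonempty finite words `v`
with `v⁻¹R = R` such that no proper nonempty prefix `v'` of `v`
satisfies `v'⁻¹R = R`.  (For `R = u⁻¹L` this says `(uv)⁻¹L = u⁻¹L` and
`(uv')⁻¹L ≠ u⁻¹L` for proper nonempty prefixes.) -/
def localAlphabet {A : Type} (R : Set (ℕ → A)) : Set (List A) :=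
  {v | v ≠ [] ∧ residualLang v R = R ∧
    ∀ v' : List A, v' <+: v → v' ≠ [] → v' ≠ v → residualLang v' R ≠ R}

/-- `PathCol M q w X p`: there is a finite path of `M` from `q` to `p`
labelled by `w` whose transitions produce exactly the set of colours `X`
(the union of the outputs along the path). -/
inductive PathCol {A C : Type} (M : Automaton A (Set C)) :
    M.Q → List A → Set C → M.Q → Prop
  | nil (q : M.Q) : PathCol M q [] ∅ q
  | cons {q r : M.Q} {a : A} {w : List A} {X : Set C}
      (t : AutTrans M.Q A (Set C)) (ht : t ∈ M.delta) (hsrc : t.src = q)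
      (hlab : t.lab = a) (htail : PathCol M t.dst w X r) :
      PathCol M q (a :: w) (t.out ∪ X) r

/-- The localisation `A|_R` of a generalised coBüchi automaton `M` to the
residual `R`, with initial state `q0`: states are the states of `M`
recognising `R`, the alphabet is `Σ_R`, and there is a transition
`q →^{w:X} p` for every finite path of `M` from `q` to `p` labelled by
`w ∈ Σ_R` producing the set of colours `X`. -/
noncomputable def localAut {A C : Type} (M : Automaton A (Set C)) (R : Set (ℕ → A))
    (q0 : {q : M.Q // M.LangFrom q = R}) :
    Automaton (↥(localAlphabet R)) (Set C) where
  Q := {q : M.Q // M.LangFrom q = R}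
  fin := by
    letI := M.fin
    classical
    infer_instance
  init := q0
  delta := {t | PathCol M t.src.1 t.lab.1 t.out t.dst.1}
  acc := genCoBuchi C

/-- The automaton `M` with initial state `q`. -/
def withInit {A Γ : Type} (M : Automaton A Γ) (q : M.Q) : Automaton A Γ :=
  { M with init := q }

/-- Recolour the automaton `M` via `f`, keeping states, initial state and the
underlying transitions, and replacing the acceptance condition by `acc'`. -/
def recolor {A Γ Γ' : Type} (M : Automaton A Γ) (f : AutTrans M.Q A Γ → Γ')
    (acc' : Set (ℕ → Γ')) : Automaton A Γ' where
  Q := M.Q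
  fin := M.fin
  init := M.init
  delta := {t' | ∃ t ∈ M.delta, t'.src = t.src ∧ t'.lab = t.lab ∧ t'.out = f t ∧ t'.dst = t.dst}
  acc := acc'

/-- Concatenation of the first `k` blocks of a sequence of finite words. -/
def flattenPrefix {A : Type} (u : ℕ → List A) (k : ℕ) : List A :=
  (List.ofFn fun i : Fin k => u i).flatten

/-- `x ∈ A^ω` is the concatenation of the infinite sequence of finite words `u`. -/
def IsFlatten {A : Type} (u : ℕ → List A) (x : ℕ → A) : Prop :=
  ∀ (k n : ℕ) (h : n < (flattenPrefix u k).length),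
    (flattenPrefix u k).get ⟨n, h⟩ = x n

/-- Cascade composition `B ∘ M`: the outputs of `M` are fed as inputs to `B`. -/
def composeAut {A Γ Γ' : Type} (B : Automaton Γ Γ') (M : Automaton A Γ) :
    Automaton A Γ' where
  Q := M.Q × B.Q
  fin := by letI := M.fin; letI := B.fin; infer_instance
  init := (M.init, B.init)
  delta := {t | ∃ tM ∈ M.delta, ∃ tB ∈ B.delta,
    t.src = (tM.src, tB.src) ∧ t.lab = tM.lab ∧ tB.lab = tM.out ∧
    t.out = tB.out ∧ t.dst = (tM.dst, tB.dst)}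
  acc := B.acc

/-- The language `L_G = ⋂_v L_v` associated with a graph `G`: words over the
vertices such that for every vertex `v`, either the factor `vv` occurs
infinitely often, or letters outside the closed neighbourhood `N[v]` occur
infinitely often. -/
def LG {V : Type} (G : SimpleGraph V) : Set (ℕ → V) :=
  {w | ∀ v : V, (∀ n : ℕ, ∃ m : ℕ, n ≤ m ∧ w m = v ∧ w (m + 1) = v) ∨
      (∀ n : ℕ, ∃ m : ℕ, n ≤ m ∧ w m ≠ v ∧ ¬ G.Adj v (w m))}

/- A run of `B` that eventually avoids the colour `i` is, from then on, the image under `φ i` of a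
safe run of `M` inside the `i`-th safe component, so its suffix lies in the residual of its current
state; since every transition of `B` is shadowed by a transition of `M` between states with the
same residuals, this propagates back to the initial residual `L`. Conversely, `B` follows the
resolver of `M` through `q ↦ φ (c q) q`, where `c q` indexes the safe component of `q`: an
accepting run of `M` is eventually safe, hence (normal form) stays in one component `c`, and the
lifted run then never sees the colour `c`. -/

def wordDrop {A : Type} (N : ℕ) (w : ℕ → A) : ℕ → A := fun l => w (N + l)

@[simp]
theorem wordDrop_zero {A : Type} (w : ℕ → A) : wordDrop 0 w = w := by
  funext l; simp [wordDrop]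

theorem mem_genCoBuchi_of_tail {C : Type} {f : ℕ → Set C}
    (h : (fun l => f (l + 1)) ∈ genCoBuchi C) : f ∈ genCoBuchi C := by
  obtain ⟨c, N, hc⟩ := h
  refine ⟨c, N + 1, fun l hl => ?_⟩
  obtain ⟨l, rfl⟩ : ∃ l', l = l' + 1 := ⟨l - 1, by omega⟩
  exact hc l (by omega)

namespace Automaton

variable {A Γ Γ' C : Type}

theorem IsRunFrom.drop {M : Automaton A Γ} {q : M.Q} {w : ℕ → A} {ρ : ℕ → AutTrans M.Q A Γ}
    (h : M.IsRunFrom q w ρ) (N : ℕ) :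
    M.IsRunFrom (ρ N).src (wordDrop N w) (fun l => ρ (N + l)) :=
  ⟨rfl, fun l => h.2 (N + l)⟩

theorem wordDrop_mem_langFrom_of_mem_dst {M : Automaton A (Set C)} (hacc : M.acc = genCoBuchi C)
    {t : AutTrans M.Q A (Set C)} (ht : t ∈ M.delta) {w : ℕ → A} {l : ℕ} (hlab : t.lab = w l)
    (h : wordDrop (l + 1) w ∈ M.LangFrom t.dst) : wordDrop l w ∈ M.LangFrom t.src := by
  obtain ⟨ρ, ⟨h0, hρ⟩, hout⟩ := h
  refine ⟨fun | 0 => t | j + 1 => ρ j, ⟨rfl, ?_⟩, ?_⟩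
  · rintro (_ | j)
    · exact ⟨ht, by simpa [wordDrop] using hlab, h0.symm⟩
    · refine ⟨(hρ j).1, (hρ j).2.1.trans (congrArg w (by omega)), (hρ j).2.2⟩
  · rw [hacc] at hout ⊢
    exact mem_genCoBuchi_of_tail hout

theorem mem_of_wordDrop_mem {M : Automaton A (Set C)} (hacc : M.acc = genCoBuchi C)
    {X : ℕ → Set (ℕ → A)} {w : ℕ → A}
    (hstep : ∀ l, ∃ s ∈ M.delta,
      M.LangFrom s.src = X l ∧ s.lab = w l ∧ M.LangFrom s.dst = X (l + 1))
    {N : ℕ} (hN : wordDrop N w ∈ X N) : w ∈ X 0 := by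
  suffices h : ∀ d l, l + d = N → wordDrop l w ∈ X l by simpa using h N 0 (by omega)
  intro d
  induction d with
  | zero => rintro l rfl; exact hN
  | succ d ih =>
    intro l hl
    obtain ⟨s, hs, hsrc, hlab, hdst⟩ := hstep l
    rw [← hsrc]
    exact wordDrop_mem_langFrom_of_mem_dst hacc hs hlab (hdst ▸ ih (l + 1) (by omega))

theorem safeLang_subset_langFrom {M : Automaton A (Set Unit)} (hacc : M.acc = genCoBuchi Unit)
    (q : M.Q) : M.SafeLang q ⊆ M.LangFrom q :=
  fun _ ⟨ρ, hρ, hsafe⟩ => ⟨ρ, hρ, hacc ▸ ⟨(), 0, fun l _ => hsafe l⟩⟩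

theorem safeConn_equivalence (M : Automaton A (Set Unit)) : Equivalence M.SafeConn :=
  ⟨fun _ => ⟨.refl, .refl⟩, fun h => ⟨h.2, h.1⟩, fun h h' => ⟨h.1.trans h'.1, h'.2.trans h.2⟩⟩

theorem safeComponentOf_eq {M : Automaton A (Set Unit)} {p q : M.Q} (h : M.SafeConn p q) :
    M.safeComponentOf p = M.safeComponentOf q :=
  Set.ext fun _ => ⟨fun hx => (safeConn_equivalence M).trans hx h,
    fun hx => (safeConn_equivalence M).trans hx ((safeConn_equivalence M).symm h)⟩

theorem exists_safeComponent_index {ι : Type*} {M : Automaton A (Set Unit)} {S : ι → Set M.Q}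
    {D : ι → Set (AutTrans M.Q A (Set Unit))}
    (hall : ∀ (S' : Set M.Q) (D' : Set (AutTrans M.Q A (Set Unit))),
      M.IsSafeComponent S' D' → ∃ i, S i = S' ∧ D i = D') :
    ∃ c : M.Q → ι, (∀ q, S (c q) = M.safeComponentOf q) ∧
      ∀ p q, M.SafeConn p q → c p = c q := by
  have hS : ∀ q, ∃ i, S i = M.safeComponentOf q :=
    fun q => (hall _ _ ⟨⟨q, rfl⟩, rfl⟩).imp fun _ h => h.1
  have : Nonempty ι := (hS M.init).nonempty
  exact ⟨fun q => Function.invFun S (M.safeComponentOf q), fun q => Function.invFun_eq (hS q),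
    fun p q h => by simp only [safeComponentOf_eq h]⟩

theorem safeConn_of_safe_from {M : Automaton A (Set Unit)} (hNF : M.NormalForm) {q : M.Q}
    {w : ℕ → A} {ρ : ℕ → AutTrans M.Q A (Set Unit)} (hρ : M.IsRunFrom q w ρ) {N : ℕ}
    (hsafe : ∀ l, N ≤ l → () ∉ (ρ l).out) : ∀ l, N ≤ l → M.SafeConn (ρ l).src (ρ N).src := by
  intro l hl
  induction l, hl using Nat.le_induction with
  | base => exact (safeConn_equivalence M).refl _
  | succ l hl ih =>
    have hstep := hNF (ρ l) (hρ.2 l).1 (hsafe l hl)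
    rw [(hρ.2 l).2.2] at hstep
    exact (safeConn_equivalence M).trans ((safeConn_equivalence M).symm hstep) ih

def IsRunLift (M : Automaton A Γ) (B : Automaton A Γ')
    (g : ℕ → AutTrans M.Q A Γ → AutTrans B.Q A Γ') : Prop :=
  ∀ w ρ, M.IsRunFrom M.init w ρ → B.IsRunFrom B.init w (fun l => g l (ρ l)) ∧
    ((fun l => (ρ l).out) ∈ M.acc → (fun l => (g l (ρ l)).out) ∈ B.acc)

theorem IsRunLift.lang_subset {M : Automaton A Γ} {B : Automaton A Γ'}
    {g : ℕ → AutTrans M.Q A Γ → AutTrans B.Q A Γ'} (h : IsRunLift M B g) : M.Lang ⊆ B.Lang :=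
  fun w ⟨ρ, hρ, hacc⟩ => ⟨_, (h w ρ hρ).1, (h w ρ hρ).2 hacc⟩

theorem IsRunLift.historyDeterministic {M : Automaton A Γ} {B : Automaton A Γ'}
    {g : ℕ → AutTrans M.Q A Γ → AutTrans B.Q A Γ'} (h : IsRunLift M B g)
    (hM : M.HistoryDeterministic) (hB : B.Lang ⊆ M.Lang) : B.HistoryDeterministic := by
  obtain ⟨r, hr⟩ := hM
  refine ⟨fun u => g (u.length - 1) (r u), fun w => ?_⟩
  have hres : B.resRun (fun u => g (u.length - 1) (r u)) w = fun l => g l (M.resRun r w l) := by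
    funext l; simp [resRun]
  rw [hres]
  exact ⟨(h w _ (hr w).1).1, fun hw => (h w _ (hr w).1).2 ((hr w).2 (hB hw))⟩

end Automaton

section ResidualAutomaton

variable {A : Type} {m k : ℕ} {n : Fin m → ℕ}

def residualCol {Q : Type} (D : Fin k → Set (AutTrans Q A (Set Unit)))
    (φ : Fin k → Q → Σ j : Fin m, Fin (n j)) (p : Σ j : Fin m, Fin (n j)) (a : A)
    (p' : Σ j : Fin m, Fin (n j)) : Set (Fin k) :=
  {i | ¬ ∃ s ∈ D i, φ i s.src = p ∧ s.lab = a ∧ φ i s.dst = p'}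

def residualAutomaton (M : Automaton A (Set Unit)) (R : Fin m → Set (ℕ → A)) (n : Fin m → ℕ)
    (j0 : Fin m) (pinit : Fin (n j0)) (D : Fin k → Set (AutTrans M.Q A (Set Unit)))
    (φ : Fin k → M.Q → Σ j : Fin m, Fin (n j)) : Automaton A (Set (Fin k)) where
  Q := Σ j : Fin m, Fin (n j)
  fin := inferInstance
  init := ⟨j0, pinit⟩
  delta := {t | (∃ s ∈ M.delta, M.LangFrom s.src = R t.src.1 ∧
                  s.lab = t.lab ∧ M.LangFrom s.dst = R t.dst.1) ∧
            t.out = residualCol D φ t.src t.lab t.dst}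
  acc := genCoBuchi (Fin k)

/-- The first source is the initial state `⟨j0, pinit⟩`, which need not be the image of `M.init`. -/
def residualLift {Q : Type} (j0 : Fin m) (pinit : Fin (n j0))
    (D : Fin k → Set (AutTrans Q A (Set Unit))) (φ : Fin k → Q → Σ j : Fin m, Fin (n j))
    (c : Q → Fin k) (l : ℕ) (s : AutTrans Q A (Set Unit)) :
    AutTrans (Σ j : Fin m, Fin (n j)) A (Set (Fin k)) :=
  let p : Σ j : Fin m, Fin (n j) := if l = 0 then ⟨j0, pinit⟩ else φ (c s.src) s.src
  ⟨p, s.lab, residualCol D φ p s.lab (φ (c s.dst) s.dst), φ (c s.dst) s.dst⟩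

variable {M : Automaton A (Set Unit)} {R : Fin m → Set (ℕ → A)} {j0 : Fin m}
  {pinit : Fin (n j0)} {S : Fin k → Set M.Q} {D : Fin k → Set (AutTrans M.Q A (Set Unit))}
  {φ : Fin k → M.Q → Σ j : Fin m, Fin (n j)}

theorem mem_of_isRunFrom_residualAutomaton (hacc : M.acc = genCoBuchi Unit)
    (hD : ∀ i, D i = {t | t ∈ M.delta ∧ t.src ∈ S i ∧ t.dst ∈ S i ∧ () ∉ t.out})
    (hφmem : ∀ i : Fin k, ∀ q ∈ S i, R (φ i q).1 = M.LangFrom q)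
    (hφinj : ∀ i, Set.InjOn (φ i) (S i)) {p : Σ j : Fin m, Fin (n j)} {x : ℕ → A}
    {ρ : ℕ → AutTrans (Σ j : Fin m, Fin (n j)) A (Set (Fin k))}
    (hρ : (residualAutomaton M R n j0 pinit D φ).IsRunFrom p x ρ) {i : Fin k}
    (hi : ∀ l, i ∉ (ρ l).out) : x ∈ R p.1 := by
  have hpre : ∀ l, ∃ s ∈ D i,
      φ i s.src = (ρ l).src ∧ s.lab = (ρ l).lab ∧ φ i s.dst = (ρ l).dst := by
    intro l
    have := hi l
    rwa [(hρ.2 l).1.2, residualCol, Set.mem_ofPred_eq, not_not] at this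
  choose σ hσD hσsrc hσlab hσdst using hpre
  simp only [hD, Set.mem_ofPred_eq] at hσD
  have hsafe : x ∈ M.SafeLang (σ 0).src := by
    refine ⟨σ, ⟨rfl, fun l => ⟨(hσD l).1, (hσlab l).trans (hρ.2 l).2.1, ?_⟩⟩,
      fun l => (hσD l).2.2.2⟩
    exact hφinj i (hσD l).2.2.1 (hσD (l + 1)).2.1
      ((hσdst l).trans ((hρ.2 l).2.2.trans (hσsrc (l + 1)).symm))
  rw [← hρ.1, ← hσsrc 0, hφmem i _ (hσD 0).2.1]
  exact M.safeLang_subset_langFrom hacc _ hsafe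

theorem residualAutomaton_lang_subset (hacc : M.acc = genCoBuchi Unit)
    (hD : ∀ i, D i = {t | t ∈ M.delta ∧ t.src ∈ S i ∧ t.dst ∈ S i ∧ () ∉ t.out})
    (hφmem : ∀ i : Fin k, ∀ q ∈ S i, R (φ i q).1 = M.LangFrom q)
    (hφinj : ∀ i, Set.InjOn (φ i) (S i)) :
    (residualAutomaton M R n j0 pinit D φ).Lang ⊆ R j0 := by
  rintro w ⟨ρ, hρ, i, N, hi⟩
  have hsuffix : wordDrop N w ∈ R (ρ N).src.1 :=
    mem_of_isRunFrom_residualAutomaton hacc hD hφmem hφinj (hρ.drop N)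
      fun l => hi (N + l) (Nat.le_add_right N l)
  have hstep : ∀ l, ∃ s ∈ M.delta, M.LangFrom s.src = R (ρ l).src.1 ∧ s.lab = w l ∧
      M.LangFrom s.dst = R (ρ (l + 1)).src.1 := by
    intro l
    obtain ⟨⟨s, hs, hsrc, hlab, hdst⟩, -⟩ := (hρ.2 l).1
    exact ⟨s, hs, hsrc, hlab.trans (hρ.2 l).2.1, (hρ.2 l).2.2 ▸ hdst⟩
  have := Automaton.mem_of_wordDrop_mem hacc hstep hsuffix
  rwa [hρ.1] at this

theorem isRunFrom_residualLift {c : M.Q → Fin k} (hinit : M.LangFrom M.init = R j0)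
    (hψ : ∀ q, R (φ (c q) q).1 = M.LangFrom q) {w : ℕ → A}
    {ρ : ℕ → AutTrans M.Q A (Set Unit)} (hρ : M.IsRunFrom M.init w ρ) :
    (residualAutomaton M R n j0 pinit D φ).IsRunFrom ⟨j0, pinit⟩ w
      (fun l => residualLift j0 pinit D φ c l (ρ l)) := by
  refine ⟨rfl, fun l => ⟨⟨⟨ρ l, (hρ.2 l).1, ?_, rfl, (hψ _).symm⟩, rfl⟩, (hρ.2 l).2.1, ?_⟩⟩
  · rcases l with _ | l
    · simpa [residualLift, hρ.1] using hinit
    · exact (hψ _).symm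
  · show φ (c (ρ l).dst) (ρ l).dst = φ (c (ρ (l + 1)).src) (ρ (l + 1)).src
    rw [(hρ.2 l).2.2]

theorem residualLift_mem_genCoBuchi (hacc : M.acc = genCoBuchi Unit) (hNF : M.NormalForm)
    (hD : ∀ i, D i = {t | t ∈ M.delta ∧ t.src ∈ S i ∧ t.dst ∈ S i ∧ () ∉ t.out})
    {c : M.Q → Fin k} (hcS : ∀ q, S (c q) = M.safeComponentOf q)
    (hc : ∀ p q, M.SafeConn p q → c p = c q) {q : M.Q} {w : ℕ → A}
    {ρ : ℕ → AutTrans M.Q A (Set Unit)} (hρ : M.IsRunFrom q w ρ)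
    (hρacc : (fun l => (ρ l).out) ∈ M.acc) :
    (fun l => (residualLift j0 pinit D φ c l (ρ l)).out) ∈ genCoBuchi (Fin k) := by
  rw [hacc] at hρacc
  obtain ⟨⟨⟩, N, hsafe⟩ := hρacc
  have hconn := Automaton.safeConn_of_safe_from hNF hρ hsafe
  refine ⟨c (ρ N).src, N + 1, fun l hl => ?_⟩
  have hsrc := hconn l (by omega)
  have hdst : M.SafeConn (ρ l).dst (ρ N).src := (hρ.2 l).2.2 ▸ hconn (l + 1) (by omega)
  have hmem : ρ l ∈ D (c (ρ N).src) := by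
    rw [hD, hcS]
    exact ⟨(hρ.2 l).1, hsrc, hdst, hsafe l (by omega)⟩
  simp only [residualLift, if_neg (show l ≠ 0 by omega), hc _ _ hsrc, hc _ _ hdst]
  exact fun hcol => hcol ⟨ρ l, hmem, rfl, rfl, rfl⟩

theorem residualAutomaton_isRunLift (hacc : M.acc = genCoBuchi Unit) (hNF : M.NormalForm)
    (hinit : M.LangFrom M.init = R j0)
    (hD : ∀ i, D i = {t | t ∈ M.delta ∧ t.src ∈ S i ∧ t.dst ∈ S i ∧ () ∉ t.out})
    (hφmem : ∀ i : Fin k, ∀ q ∈ S i, R (φ i q).1 = M.LangFrom q)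
    {c : M.Q → Fin k} (hcS : ∀ q, S (c q) = M.safeComponentOf q)
    (hc : ∀ p q, M.SafeConn p q → c p = c q) :
    Automaton.IsRunLift M (residualAutomaton M R n j0 pinit D φ)
      (residualLift j0 pinit D φ c) := by
  have hψ : ∀ q, R (φ (c q) q).1 = M.LangFrom q := fun q =>
    hφmem _ q (by rw [hcS]; exact (M.safeConn_equivalence).refl q)
  exact fun w ρ hρ => ⟨isRunFrom_residualLift hinit hψ hρ,
    residualLift_mem_genCoBuchi hacc hNF hD hcS hc hρ⟩

end ResidualAutomaton

theorem stmt_7_general {A : Type} (L : Set (ℕ → A))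
    (M : Automaton A (Set Unit)) (hacc : M.acc = genCoBuchi Unit)
    (hnice : M.Nice) (hhd : M.HistoryDeterministic) (hlang : M.Lang = L)
    (m : ℕ) (R : Fin m → Set (ℕ → A))
    (j0 : Fin m) (hj0 : R j0 = L)
    (k : ℕ) (S : Fin k → Set M.Q) (D : Fin k → Set (AutTrans M.Q A (Set Unit)))
    (hcomp : ∀ i, M.IsSafeComponent (S i) (D i))
    (hall : ∀ (S' : Set M.Q) (D' : Set (AutTrans M.Q A (Set Unit))),
      M.IsSafeComponent S' D' → ∃ i, S i = S' ∧ D i = D')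
    (n : Fin m → ℕ)
    (pinit : Fin (n j0))
    (φ : Fin k → M.Q → (Σ j : Fin m, Fin (n j)))
    (hφmem : ∀ i : Fin k, ∀ q ∈ S i, R (φ i q).1 = M.LangFrom q)
    (hφinj : ∀ i, Set.InjOn (φ i) (S i)) :
    let B : Automaton A (Set (Fin k)) :=
      { Q := Σ j : Fin m, Fin (n j),
        fin := inferInstance,
        init := ⟨j0, pinit⟩,
        delta := {t | (∃ s ∈ M.delta, M.LangFrom s.src = R t.src.1 ∧
                        s.lab = t.lab ∧ M.LangFrom s.dst = R t.dst.1) ∧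
                  t.out = {i | ¬ ∃ s ∈ D i,
                    φ i s.src = t.src ∧ s.lab = t.lab ∧ φ i s.dst = t.dst}},
        acc := genCoBuchi (Fin k) }
    B.HistoryDeterministic ∧ B.Lang = L := by
  show (residualAutomaton M R n j0 pinit D φ).HistoryDeterministic ∧
    (residualAutomaton M R n j0 pinit D φ).Lang = L
  have hD : ∀ i, D i = {t | t ∈ M.delta ∧ t.src ∈ S i ∧ t.dst ∈ S i ∧ () ∉ t.out} :=
    fun i => (hcomp i).2
  obtain ⟨c, hcS, hc⟩ := Automaton.exists_safeComponent_index hall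
  have hsub : (residualAutomaton M R n j0 pinit D φ).Lang ⊆ L :=
    hj0 ▸ residualAutomaton_lang_subset hacc hD hφmem hφinj
  have hlift := residualAutomaton_isRunLift (pinit := pinit) hacc hnice.2.2.1
    (hlang.trans hj0.symm) hD hφmem hcS hc
  exact ⟨hlift.historyDeterministic hhd (hlang ▸ hsub),
    hsub.antisymm (hlang ▸ hlift.lang_subset)⟩

/-- correctness, general case: the generalised coBüchi automaton
built from a nice HD coBüchi automaton for `L` by taking `n_j` copies of each
residual `R_j` (where `n_j` is the maximal number of states recognising `R_j`
in a safe component), with all residual-consistent transitions, coloured so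
that colour `i` marks the transitions not in the image of the `i`-th safe
component, is history-deterministic and recognises `L`. -/
theorem stmt_7 {A : Type} (L : Set (ℕ → A))
    (M : Automaton A (Set Unit)) (hacc : M.acc = genCoBuchi Unit)
    (hnice : M.Nice) (hhd : M.HistoryDeterministic) (hlang : M.Lang = L)
    (m : ℕ) (R : Fin m → Set (ℕ → A)) (hRinj : Function.Injective R)
    (hRres : ∀ j, ∃ u : List A, R j = residualLang u L)
    (hRall : ∀ u : List A, ∃ j, residualLang u L = R j)
    (j0 : Fin m) (hj0 : R j0 = L)
    (k : ℕ) (S : Fin k → Set M.Q) (D : Fin k → Set (AutTrans M.Q A (Set Unit)))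
    (hcomp : ∀ i, M.IsSafeComponent (S i) (D i))
    (hall : ∀ (S' : Set M.Q) (D' : Set (AutTrans M.Q A (Set Unit))),
      M.IsSafeComponent S' D' → ∃ i, S i = S' ∧ D i = D')
    (n : Fin m → ℕ)
    (hub : ∀ (i : Fin k) (j : Fin m), (S i ∩ {q | M.LangFrom q = R j}).ncard ≤ n j)
    (hex : ∀ j : Fin m, ∃ i : Fin k, (S i ∩ {q | M.LangFrom q = R j}).ncard = n j)
    (pinit : Fin (n j0))
    (φ : Fin k → M.Q → (Σ j : Fin m, Fin (n j)))
    (hφmem : ∀ i : Fin k, ∀ q ∈ S i, R (φ i q).1 = M.LangFrom q)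
    (hφinj : ∀ i, Set.InjOn (φ i) (S i)) :
    let B : Automaton A (Set (Fin k)) :=
      { Q := Σ j : Fin m, Fin (n j),
        fin := inferInstance,
        init := ⟨j0, pinit⟩,
        delta := {t | (∃ s ∈ M.delta, M.LangFrom s.src = R t.src.1 ∧
                        s.lab = t.lab ∧ M.LangFrom s.dst = R t.dst.1) ∧
                  t.out = {i | ¬ ∃ s ∈ D i,
                    φ i s.src = t.src ∧ s.lab = t.lab ∧ φ i s.dst = t.dst}},
        acc := genCoBuchi (Fin k) }
    B.HistoryDeterministic ∧ B.Lang = L :=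
  stmt_7_general L M hacc hnice hhd hlang m R j0 hj0 k S D hcomp hall n pinit φ hφmem hφinj
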